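/- The maximum of det B(A₁₁, x, y, 1) over all vectors x, y ∈ {0, 1}¹¹, where A₁₁ is the upper-left 11 × 11 submatrix of A₁₅, equals 1608, and this maximum is attained by the bordering that yields A₁₂ (the upper-left 12 × 12 submatrix of A₁₅). -/

import Mathlib

open Matrix

/-- The bordered matrix `B(A, x, y, z)`: upper-left `n × n` block `A`, first `n` entries of the
last column given by `y`, first `n` entries of the last row given by `x`, corner entry `z`. -/
def border {n : ℕ} (A : Matrix (Fin n) (Fin n) ℤ) (x y : Fin n → ℤ) (z : ℤ) :
    Matrix (Fin (n + 1)) (Fin (n + 1)) ℤ :=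
  Matrix.of fun i j =>
    if hi : (i : ℕ) < n then
      if hj : (j : ℕ) < n then A ⟨i, hi⟩ ⟨j, hj⟩ else y ⟨i, hi⟩
    else
      if hj : (j : ℕ) < n then x ⟨j, hj⟩ else z

/-- The matrix `A₁₅` from the paper. -/
def A15 : Matrix (Fin 15) (Fin 15) ℤ :=
  !![1, 0, 1, 1, 0, 0, 0, 0, 0, 0, 1, 0, 0, 1, 1;
      1, 1, 0, 0, 0, 1, 0, 1, 1, 1, 1, 0, 0, 0, 0;
      0, 1, 1, 0, 1, 0, 0, 1, 0, 0, 1, 1, 0, 1, 0;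
      0, 1, 0, 1, 1, 1, 0, 0, 0, 0, 0, 0, 1, 0, 1;
      1, 0, 0, 0, 1, 1, 1, 1, 0, 0, 0, 0, 0, 1, 0;
      0, 0, 1, 0, 0, 1, 1, 0, 1, 0, 0, 0, 1, 1, 0;
      0, 1, 0, 1, 0, 0, 1, 1, 0, 0, 1, 0, 1, 1, 0;
      0, 0, 1, 1, 0, 1, 0, 1, 0, 1, 0, 1, 1, 0, 0;
      0, 0, 0, 1, 1, 0, 0, 1, 1, 1, 0, 0, 0, 1, 1;
      1, 1, 1, 0, 1, 0, 1, 0, 0, 1, 0, 0, 1, 0, 0;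
      0, 0, 0, 0, 1, 1, 1, 0, 0, 1, 1, 1, 0, 0, 1;
      1, 1, 0, 1, 0, 0, 1, 0, 1, 0, 0, 1, 0, 0, 0;
      1, 0, 0, 0, 1, 0, 0, 1, 1, 0, 1, 1, 1, 0, 1;
      1, 1, 0, 0, 0, 1, 0, 0, 0, 1, 0, 1, 1, 1, 1;
      0, 1, 1, 0, 0, 0, 1, 1, 0, 0, 0, 0, 0, 0, 1]

/-- `Asub k h` is the upper-left `k × k` submatrix `A_k` of `A₁₅`. -/
def Asub (k : ℕ) (h : k ≤ 15) : Matrix (Fin k) (Fin k) ℤ :=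
  A15.submatrix (Fin.castLE h) (Fin.castLE h)

/-!
Bordering `A` by `(x, y, 1)` is a Schur-complement computation:
`det B(A, x, y, 1) = det A - xᵀ (adj A) y`. Since `det A₁₁ = 604`, maximizing the determinant
means minimizing the bilinear form `xᵀ (adj A₁₁) y` over 0/1 vectors. For fixed `y` the best `x`
selects exactly the negative entries of `(adj A₁₁) y`, so the minimum is the least value of
`∑ᵢ min 0 ((adj A₁₁) y)ᵢ` over the `2¹¹` vectors `y`, which an exhaustive search bounds below by
`-1004`; the last row and column of `A₁₂` attain it. The value `det A₁₁ = 604` is certified by an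
integer lower triangular `L` with `L * A₁₁` upper triangular.
-/

theorem border_eq_reindex_fromBlocks {n : ℕ} (A : Matrix (Fin n) (Fin n) ℤ) (x y : Fin n → ℤ)
    (z : ℤ) :
    border A x y z = reindex finSumFinEquiv finSumFinEquiv
      (fromBlocks A (replicateCol (Fin 1) y) (replicateRow (Fin 1) x) (of fun _ _ => z)) := by
  ext i j
  refine Fin.addCases (fun i => ?_) (fun i => ?_) i <;>
    refine Fin.addCases (fun j => ?_) (fun j => ?_) j <;>
    simp [border, Fin.fin_one_eq_zero]

theorem det_border {n : ℕ} {A M : Matrix (Fin n) (Fin n) ℤ} (hM : M * A = A.det • 1)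
    (hA : A.det ≠ 0) (x y : Fin n → ℤ) (z : ℤ) :
    (border A x y z).det = A.det * z - x ⬝ᵥ (M *ᵥ y) := by
  set d := A.det
  let B := replicateCol (Fin 1) y
  let C := replicateRow (Fin 1) x
  let D : Matrix (Fin 1) (Fin 1) ℤ := of fun _ _ => z
  -- block row elimination of `C` against `A`, using `M` in place of `A⁻¹`
  let E := fromBlocks (1 : Matrix (Fin n) (Fin n) ℤ) 0 (-(C * M))
    (d • (1 : Matrix (Fin 1) (Fin 1) ℤ))
  have hE : E * fromBlocks A B C D = fromBlocks A B 0 (d • D - C * M * B) := by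
    simp only [E, fromBlocks_multiply, Matrix.one_mul, Matrix.zero_mul, add_zero, Matrix.neg_mul,
      Matrix.mul_assoc, hM, Matrix.mul_smul, Matrix.mul_one, Matrix.smul_mul, neg_add_cancel]
    abel_nf
  have hschur : (d • D - C * M * B).det = d * z - x ⬝ᵥ (M *ᵥ y) := by
    rw [det_unique, Matrix.mul_assoc, ← replicateCol_mulVec]
    rfl
  have key := congrArg det hE
  rw [det_mul, det_fromBlocks_zero₁₂, det_fromBlocks_zero₂₁, hschur] at key
  simp only [det_one, det_unique, Matrix.smul_apply, one_apply_eq, smul_eq_mul, mul_one,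
    one_mul] at key
  rw [border_eq_reindex_fromBlocks, det_reindex_self]
  exact mul_left_cancel₀ hA key

namespace Matrix

theorem prod_diag_mul_det_eq_prod_diag {ι R : Type*} [Fintype ι] [LinearOrder ι] [CommRing R]
    {L A U : Matrix ι ι R} (hL : L.IsLowerTriangular) (hU : U.IsUpperTriangular)
    (h : L * A = U) : (∏ i, L i i) * A.det = ∏ i, U i i := by
  rw [← det_of_isLowerTriangular L hL, ← det_of_isUpperTriangular hU, ← h, det_mul]

variable {m : ℕ}

/-- Branching on one coordinate of `y` at a time shares the partial sums `v + C *ᵥ y`, so the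
kernel evaluates each of the `2ⁿ` cases with a few vector additions rather than a full
matrix-vector product. -/
def allBinaryCombos (p : (Fin m → ℤ) → Prop) [DecidablePred p] :
    {n : ℕ} → Matrix (Fin m) (Fin n) ℤ → (Fin m → ℤ) → Bool
  | 0, _, v => decide (p v)
  | _ + 1, C, v =>
    allBinaryCombos p (C.submatrix id Fin.succ) v &&
      allBinaryCombos p (C.submatrix id Fin.succ) (v + fun i => C i 0)

theorem allBinaryCombos_sound {p : (Fin m → ℤ) → Prop} [DecidablePred p] :
    ∀ {n : ℕ} (C : Matrix (Fin m) (Fin n) ℤ) (v : Fin m → ℤ), allBinaryCombos p C v = true →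
      ∀ y : Fin n → ℤ, (∀ j, y j = 0 ∨ y j = 1) → p (v + C *ᵥ y)
  | 0, C, v, h, y, _ => by
    simpa [allBinaryCombos, mulVec_empty] using h
  | n + 1, C, v, h, y, hy => by
    rw [allBinaryCombos, Bool.and_eq_true] at h
    have hsplit : C *ᵥ y = y 0 • (fun i => C i 0) + C.submatrix id Fin.succ *ᵥ Fin.tail y := by
      ext i
      simp [mulVec, dotProduct, Fin.sum_univ_succ, Fin.tail, mul_comm]
    have htail := allBinaryCombos_sound (p := p) (C.submatrix id Fin.succ)
    rcases hy 0 with h0 | h0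
    · simpa [hsplit, h0] using htail v h.1 (Fin.tail y) fun j => hy j.succ
    · simpa [hsplit, h0, add_assoc] using htail _ h.2 (Fin.tail y) fun j => hy j.succ

end Matrix

theorem sum_min_zero_le_dotProduct {ι : Type*} [Fintype ι] (x w : ι → ℤ)
    (hx : ∀ i, x i = 0 ∨ x i = 1) : ∑ i, min 0 (w i) ≤ x ⬝ᵥ w :=
  Finset.sum_le_sum fun i _ => by
    rcases hx i with h | h <;> simp [h]

local notation "A₁₁" => Asub 11 (by norm_num)

def adjA11 : Matrix (Fin 11) (Fin 11) ℤ :=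
  !![ 198,  120, -126,  -18,  186,  -94,  -76,  -78,  -26,  100, -116;
     -146,  122,   38,  178, -128,  -10,  114,  -34, -112,  152, -128;
       78,  -90,  170,  -62,  -64,  146,  -94,  134,  -56,   76,  -64;
      162,  -94, -158,  150,  -40,  -22,  130,   46,  116,  -28,  -40;
       20, -116,  152,  108,   92,  -40, -148, -136,  156,    4,   92;
      -36,   88,  -32,  168,   76,   72,  -96,  124, -160, -128,   76;
      -64, -112, -124, -104,   68,  128,  232,  -48,  -16,  108,   68;
     -118,   20,  130, -154,  182,  -66,   88,  138,   46,  -84, -120;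
       22,  114,  -14,   -2,  -80,  258,  -42, -210,  232,  -56,  -80;
      -86,   76, -110, -102, -154, -130,  -28,  162,   54,  164,  148;
      166,   64,  114,  -70,  -82,  -30,   40, -102,  -34, -148,  220]

-- Row `k` of `lowerA11` is the primitive integer vector `l` with `lᵀ A_k = (0, …, 0, c)`.
def lowerA11 : Matrix (Fin 11) (Fin 11) ℤ :=
  !![  1,   0,   0,   0,   0,   0,   0,   0,   0,   0,   0;
      -1,   1,   0,   0,   0,   0,   0,   0,   0,   0,   0;
       1,  -1,   1,   0,   0,   0,   0,   0,   0,   0,   0;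
       1,  -1,  -1,   2,   0,   0,   0,   0,   0,   0,   0;
      -1,  -2,   1,   1,   3,   0,   0,   0,   0,   0,   0;
      -2,   1,  -3,   2,   1,   5,   0,   0,   0,   0,   0;
      -1,  -1,   0,  -2,   2,   1,   3,   0,   0,   0,   0;
      -5,   1,   3,  -7,   4,  -7,   3,   9,   0,   0,   0;
       0,   3,  -1,  -1,  -3,   4,  -1,  -3,   5,   0,   0;
     -18,   3, -17,  -5,  -9, -10,  -5,  21,   7,  24,   0;
      83,  32,  57, -35, -41, -15,  20, -51, -17, -74, 110]

def upperA11 : Matrix (Fin 11) (Fin 11) ℤ :=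
  !![  1,   0,   1,   1,   0,   0,   0,   0,   0,   0,   1;
       0,   1,  -1,  -1,   0,   1,   0,   1,   1,   1,   0;
       0,   0,   2,   1,   1,  -1,   0,   0,  -1,  -1,   1;
       0,   0,   0,   3,   1,   1,   0,  -2,  -1,  -1,  -1;
       0,   0,   0,   0,   5,   2,   3,   2,  -2,  -2,  -2;
       0,   0,   0,   0,   0,   9,   6,  -1,   6,   1,  -4;
       0,   0,   0,   0,   0,   0,   6,   4,   0,  -1,   1;
       0,   0,   0,   0,   0,   0,   0,  20,  -6,  10,   2;
       0,   0,   0,   0,   0,   0,   0,   0,  12,   5,   1;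
       0,   0,   0,   0,   0,   0,   0,   0,   0,  55, -37;
       0,   0,   0,   0,   0,   0,   0,   0,   0,   0, 302]

theorem lowerA11_mul : lowerA11 * A₁₁ = upperA11 := by decide

theorem lowerA11_isLowerTriangular : lowerA11.IsLowerTriangular := by decide +kernel

theorem upperA11_isUpperTriangular : upperA11.IsUpperTriangular := by decide +kernel

theorem det_A11 : (A₁₁).det = 604 := by
  have h := Matrix.prod_diag_mul_det_eq_prod_diag lowerA11_isLowerTriangular
    upperA11_isUpperTriangular lowerA11_mul
  rw [show ∏ i, lowerA11 i i = 10692000 by decide,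
    show ∏ i, upperA11 i i = 10692000 * 604 by decide] at h
  exact mul_left_cancel₀ (by norm_num) h

theorem adjA11_mul : adjA11 * A₁₁ = (A₁₁).det • 1 := by
  rw [det_A11]; decide

theorem det_border_A11 (x y : Fin 11 → ℤ) :
    (border A₁₁ x y 1).det = 604 - x ⬝ᵥ (adjA11 *ᵥ y) := by
  rw [det_border adjA11_mul (by rw [det_A11]; norm_num), det_A11, mul_one]

theorem le_sum_min_zero_adjA11_mulVec (y : Fin 11 → ℤ) (hy : ∀ j, y j = 0 ∨ y j = 1) :
    -1004 ≤ ∑ i, min 0 ((adjA11 *ᵥ y) i) := by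
  simpa using Matrix.allBinaryCombos_sound (p := fun v => -1004 ≤ ∑ i, min 0 (v i)) adjA11 0
    (by decide +kernel) y hy

theorem border_A11_eq_A12 :
    border A₁₁ (fun j => A15 ⟨11, by norm_num⟩ (Fin.castLE (by norm_num) j))
      (fun i => A15 (Fin.castLE (by norm_num) i) ⟨11, by norm_num⟩) 1 = Asub 12 (by norm_num) := by
  decide

theorem det_A12 : (Asub 12 (by norm_num)).det = 1608 := by
  rw [← border_A11_eq_A12, det_border_A11]
  decide

/-- The maximum of `det B(A_11, x, y, 1)` over `x, y ∈ {0, 1}^11` equals `1608`, and it is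
attained by the bordering of `A_11` that yields `A_12`. -/
theorem border_max_11 :
    IsGreatest {d : ℤ | ∃ x y : Fin 11 → ℤ,
        (∀ i, x i = 0 ∨ x i = 1) ∧ (∀ i, y i = 0 ∨ y i = 1) ∧
        d = (border (Asub 11 (by norm_num)) x y 1).det} 1608 ∧
    border (Asub 11 (by norm_num))
        (fun j => A15 ⟨11, by norm_num⟩ (Fin.castLE (by norm_num) j))
        (fun i => A15 (Fin.castLE (by norm_num) i) ⟨11, by norm_num⟩) 1
      = Asub 12 (by norm_num) ∧
    (Asub 12 (by norm_num)).det = 1608 := by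
  refine ⟨⟨⟨_, _, ?_, ?_, by rw [border_A11_eq_A12, det_A12]⟩, ?_⟩, border_A11_eq_A12, det_A12⟩
  · decide
  · decide
  rintro d ⟨x, y, hx, hy, rfl⟩
  rw [det_border_A11]
  linarith [sum_min_zero_le_dotProduct x (adjA11 *ᵥ y) hx, le_sum_min_zero_adjA11_mulVec y hy]
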